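/- Null-structure (Lipschitz) upper bound for the relativistic velocity map: for all ξ, η ∈ ℝ², |ξ/⟨ξ⟩ − η/⟨η⟩| ≤ 2|ξ − η| / max(⟨ξ⟩, ⟨η⟩); in particular the map ξ ↦ ξ/⟨ξ⟩ is 2-Lipschitz and the multiplier ξ/⟨ξ⟩ − (ξ−η)/⟨ξ−η⟩ vanishes at η = 0 with size O(|η|/⟨ξ⟩). -/

import Mathlib

/-!
Order the points so that `A = ⟨ξ⟩ ≥ B = ⟨η⟩` and split
`ξ/A - η/B = (ξ - η)/A + (1/A - 1/B) η`. The second term has norm `(A - B) |η| / (A B)`,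
which is at most `(A - B)/A ≤ |ξ - η|/A` because `|η| ≤ B` and the bracket is 1-Lipschitz.
-/

noncomputable section

/-- Japanese bracket `⟨ξ⟩ = (1+|ξ|²)^{1/2}` on `ℝ²`. -/
def jb (ξ : EuclideanSpace ℝ (Fin 2)) : ℝ := Real.sqrt (1 + ‖ξ‖ ^ 2)

/-- The relativistic velocity map `ξ ↦ ξ/⟨ξ⟩`. -/
def vel (ξ : EuclideanSpace ℝ (Fin 2)) : EuclideanSpace ℝ (Fin 2) := (jb ξ)⁻¹ • ξ

open Real

lemma abs_sqrt_one_add_sq_sub_le (a b : ℝ) :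
    |√(1 + a ^ 2) - √(1 + b ^ 2)| ≤ |a - b| := by
  set A := √(1 + a ^ 2)
  set B := √(1 + b ^ 2)
  have hA : A ^ 2 = 1 + a ^ 2 := sq_sqrt (by positivity)
  have hB : B ^ 2 = 1 + b ^ 2 := sq_sqrt (by positivity)
  have haA : |a| ≤ A := abs_le_sqrt (by linarith)
  have hbB : |b| ≤ B := abs_le_sqrt (by linarith)
  have hAB : 0 < A + B := by positivity
  have hdiff : |A - B| * (A + B) = |a - b| * |a + b| := by
    rw [← abs_of_pos hAB, ← abs_mul, ← abs_mul]
    congr 1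
    linear_combination hA - hB
  refine le_of_mul_le_mul_right ?_ hAB
  rw [hdiff]
  gcongr
  exact (abs_add_le a b).trans (add_le_add haA hbB)

section

variable {E : Type*} [SeminormedAddCommGroup E] [NormedSpace ℝ E]

lemma norm_inv_smul_sub_inv_smul_le {x y : E} {a b : ℝ} (hb : 0 < b) (hba : b ≤ a)
    (hy : ‖y‖ ≤ b) (hab : a - b ≤ ‖x - y‖) :
    ‖a⁻¹ • x - b⁻¹ • y‖ ≤ 2 * ‖x - y‖ / a := by
  have ha : 0 < a := hb.trans_le hba
  have hsplit : a⁻¹ • x - b⁻¹ • y = a⁻¹ • (x - y) + (a⁻¹ - b⁻¹) • y := by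
    rw [smul_sub, sub_smul]
    abel
  have hcoef : ‖a⁻¹ - b⁻¹‖ = (a - b) / (a * b) := by
    rw [Real.norm_eq_abs, abs_sub_comm, inv_sub_inv hb.ne' ha.ne',
      abs_of_nonneg (by have := sub_nonneg.2 hba; positivity), mul_comm b]
  have hsecond : (a - b) / (a * b) * ‖y‖ ≤ ‖x - y‖ / a := by
    calc (a - b) / (a * b) * ‖y‖ ≤ (a - b) / (a * b) * b := by
          gcongr
      _ = (a - b) / a := by field_simp
      _ ≤ ‖x - y‖ / a := by gcongr
  calc ‖a⁻¹ • x - b⁻¹ • y‖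
      ≤ ‖a⁻¹‖ * ‖x - y‖ + ‖a⁻¹ - b⁻¹‖ * ‖y‖ := by
        rw [hsplit, ← norm_smul, ← norm_smul]
        exact norm_add_le _ _
    _ ≤ ‖x - y‖ / a + ‖x - y‖ / a := by
        rw [hcoef, norm_inv, Real.norm_of_nonneg ha.le, inv_mul_eq_div]
        exact add_le_add_right hsecond _
    _ = 2 * ‖x - y‖ / a := by ring

end

lemma jb_pos (ξ : EuclideanSpace ℝ (Fin 2)) : 0 < jb ξ :=
  sqrt_pos.2 (by positivity)

lemma one_le_jb (ξ : EuclideanSpace ℝ (Fin 2)) : 1 ≤ jb ξ :=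
  le_sqrt_of_sq_le (by nlinarith [sq_nonneg ‖ξ‖])

lemma norm_le_jb (ξ : EuclideanSpace ℝ (Fin 2)) : ‖ξ‖ ≤ jb ξ :=
  le_sqrt_of_sq_le (by linarith)

lemma abs_jb_sub_jb_le (ξ η : EuclideanSpace ℝ (Fin 2)) : |jb ξ - jb η| ≤ ‖ξ - η‖ :=
  (abs_sqrt_one_add_sq_sub_le ‖ξ‖ ‖η‖).trans (abs_norm_sub_norm_le ξ η)

lemma norm_vel_sub_vel_le_of_jb_le {ξ η : EuclideanSpace ℝ (Fin 2)} (h : jb η ≤ jb ξ) :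
    ‖vel ξ - vel η‖ ≤ 2 * ‖ξ - η‖ / jb ξ :=
  norm_inv_smul_sub_inv_smul_le (jb_pos η) h (norm_le_jb η)
    ((le_abs_self _).trans (abs_jb_sub_jb_le ξ η))

lemma norm_vel_sub_vel_le (ξ η : EuclideanSpace ℝ (Fin 2)) :
    ‖vel ξ - vel η‖ ≤ 2 * ‖ξ - η‖ / max (jb ξ) (jb η) := by
  rcases le_total (jb η) (jb ξ) with h | h
  · rw [max_eq_left h]
    exact norm_vel_sub_vel_le_of_jb_le h
  · rw [max_eq_right h, norm_sub_rev, norm_sub_rev ξ]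
    exact norm_vel_sub_vel_le_of_jb_le h

lemma lipschitzWith_vel : LipschitzWith 2 vel := by
  refine LipschitzWith.of_dist_le_mul fun ξ η => ?_
  rw [dist_eq_norm, dist_eq_norm, NNReal.coe_ofNat]
  exact (norm_vel_sub_vel_le ξ η).trans
    (div_le_self (by positivity) (le_max_of_le_left (one_le_jb ξ)))

lemma norm_vel_sub_vel_sub_le (ξ η : EuclideanSpace ℝ (Fin 2)) :
    ‖vel ξ - vel (ξ - η)‖ ≤ 2 * ‖η‖ / jb ξ := by
  have h := norm_vel_sub_vel_le ξ (ξ - η)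
  rw [sub_sub_cancel] at h
  exact h.trans (div_le_div_of_nonneg_left (by positivity) (jb_pos ξ) (le_max_left _ _))

/-- Null-structure (Lipschitz) upper bound for the relativistic velocity map. -/
theorem velocity_lipschitz_bound :
    (∀ ξ η : EuclideanSpace ℝ (Fin 2),
      ‖vel ξ - vel η‖ ≤ 2 * ‖ξ - η‖ / max (jb ξ) (jb η)) ∧
    LipschitzWith 2 vel ∧
    (∀ ξ η : EuclideanSpace ℝ (Fin 2),
      ‖vel ξ - vel (ξ - η)‖ ≤ 2 * ‖η‖ / jb ξ) :=
  ⟨norm_vel_sub_vel_le, lipschitzWith_vel, norm_vel_sub_vel_sub_le⟩
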